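/- In the coalescence setting (G is the coalescence of H₁ and H₂ via the non-isolated vertex x), if G is weak bicritical, then either (H₁ is critical, H₂ is weak bicritical, and x is a critical vertex of H₂) or (H₂ is critical, H₁ is weak bicritical, and x is a critical vertex of H₁). -/

import Mathlib

open SimpleGraph Set

/-- `S` is a dominating set of the induced subgraph of `G` on the vertex set `A`:
`S ⊆ A` and every vertex of `A` is in the closed neighborhood of some vertex of `S`. -/
def IsDomOn {V : Type*} (G : SimpleGraph V) (A S : Set V) : Prop :=
  S ⊆ A ∧ ∀ v ∈ A, ∃ s ∈ S, s = v ∨ G.Adj s v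

/-- The domination number of the induced subgraph of `G` on the vertex set `A`. -/
noncomputable def domNumOn {V : Type*} (G : SimpleGraph V) (A : Set V) : ℕ :=
  sInf {n | ∃ S : Set V, IsDomOn G A S ∧ S.ncard = n}

/-- The domination number of `G`. -/
noncomputable def domNum {V : Type*} (G : SimpleGraph V) : ℕ :=
  domNumOn G Set.univ

/-- `y` is a critical vertex of the induced subgraph of `G` on `A`:
deleting `y` decreases the domination number. -/
def IsCritVertexOn {V : Type*} (G : SimpleGraph V) (A : Set V) (y : V) : Prop :=
  domNumOn G (A \ {y}) < domNumOn G A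

/-- The induced subgraph of `G` on `A` is critical: all its vertices are critical. -/
def CriticalOn {V : Type*} (G : SimpleGraph V) (A : Set V) : Prop :=
  ∀ y ∈ A, IsCritVertexOn G A y

/-- The induced subgraph of `G` on `A` is weak bicritical: no vertex deletion increases the
domination number (`V⁺ = ∅`), and deleting any vertex that keeps the domination number
unchanged (a vertex of `V⁰`) yields a critical graph. -/
def WeakBicriticalOn {V : Type*} (G : SimpleGraph V) (A : Set V) : Prop :=
  (∀ y ∈ A, domNumOn G (A \ {y}) ≤ domNumOn G A) ∧
  (∀ y ∈ A, domNumOn G (A \ {y}) = domNumOn G A → CriticalOn G (A \ {y}))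

/-!
Write `γ` for the domination number. A dominating set of a subgraph `C` of `G` splits along the
cut vertex `x`: if `x ∉ C` then `γ(C) = γ(C ∩ V₁) + γ(C ∩ V₂)`, and if `x ∈ C` then
`γ(C ∩ V₁) + γ(C ∩ V₂) ≤ γ(C) + 1`, the one extra vertex being `x` itself.

First, `x` is critical in `G`: otherwise `G - x` is critical, so for a neighbour `uᵢ` of `x` in
`Hᵢ` the graph `Hᵢ - x - uᵢ` is dominated by fewer than `γ(Hᵢ - x)` vertices; adding `x` to both
dominating sets dominates `G` with fewer than `γ(G - x) = γ(G)` vertices. The splitting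
inequalities then force `γ(G) + 1 = γ(H₁) + γ(H₂)` and `x` critical in both `Hᵢ`.

Every other deletion in `Hᵢ` is compared with the same deletion in `G`. A critical vertex of `G`
stays critical in `Hᵢ`. For `y ∈ V⁰(G)`, the graph `G - y` is critical; deleting `x` resp. a
further vertex `w` from it shows `γ(Hᵢ - y) ≤ γ(Hᵢ)` and, if equality holds, that `Hᵢ - y` is
critical. So both `Hᵢ` are weak bicritical. Finally, if `y ∈ H₁` is not critical, then for
`z ∈ V⁰(G) ∩ H₂` the splitting of `G - z - y` shows that `z` is critical in `H₂`.
-/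

section Domination

variable {V : Type*} {G : SimpleGraph V}

lemma isDomOn_self (A : Set V) : IsDomOn G A A :=
  ⟨subset_rfl, fun v hv => ⟨v, hv, Or.inl rfl⟩⟩

lemma exists_isDomOn_ncard_eq_domNumOn (A : Set V) :
    ∃ S, IsDomOn G A S ∧ S.ncard = domNumOn G A :=
  Nat.sInf_mem (s := {n | ∃ S, IsDomOn G A S ∧ S.ncard = n}) ⟨A.ncard, A, isDomOn_self A, rfl⟩

lemma domNumOn_le_ncard {A S : Set V} (h : IsDomOn G A S) : domNumOn G A ≤ S.ncard :=
  Nat.sInf_le ⟨S, h, rfl⟩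

lemma domNumOn_union_le (A B : Set V) : domNumOn G (A ∪ B) ≤ domNumOn G A + domNumOn G B := by
  obtain ⟨S, hS, hSc⟩ := exists_isDomOn_ncard_eq_domNumOn (G := G) A
  obtain ⟨T, hT, hTc⟩ := exists_isDomOn_ncard_eq_domNumOn (G := G) B
  have hdom : IsDomOn G (A ∪ B) (S ∪ T) := by
    refine ⟨union_subset_union hS.1 hT.1, ?_⟩
    rintro v (hv | hv)
    · obtain ⟨s, hs, h⟩ := hS.2 v hv; exact ⟨s, Or.inl hs, h⟩
    · obtain ⟨s, hs, h⟩ := hT.2 v hv; exact ⟨s, Or.inr hs, h⟩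
  calc domNumOn G (A ∪ B) ≤ (S ∪ T).ncard := domNumOn_le_ncard hdom
    _ ≤ S.ncard + T.ncard := ncard_union_le S T
    _ = _ := by rw [hSc, hTc]

lemma domNumOn_le_add_one_of_dominates_sdiff {A B : Set V} {x : V} (hBA : B ⊆ A) (hx : x ∈ A)
    (hN : ∀ v ∈ A, v ∉ B → x = v ∨ G.Adj x v) : domNumOn G A ≤ domNumOn G B + 1 := by
  obtain ⟨S, hS, hSc⟩ := exists_isDomOn_ncard_eq_domNumOn (G := G) B
  have hdom : IsDomOn G A (insert x S) := by
    refine ⟨insert_subset hx (hS.1.trans hBA), fun v hv => ?_⟩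
    by_cases hvB : v ∈ B
    · obtain ⟨s, hs, h⟩ := hS.2 v hvB; exact ⟨s, mem_insert_of_mem _ hs, h⟩
    · exact ⟨x, mem_insert _ _, hN v hv hvB⟩
  calc domNumOn G A ≤ (insert x S).ncard := domNumOn_le_ncard hdom
    _ ≤ S.ncard + 1 := ncard_insert_le _ _
    _ = _ := by rw [hSc]

lemma domNumOn_le_sdiff_singleton_add_one {A : Set V} {y : V} (hy : y ∈ A) :
    domNumOn G A ≤ domNumOn G (A \ {y}) + 1 :=
  domNumOn_le_add_one_of_dominates_sdiff sdiff_subset hy fun v hv hvy =>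
    Or.inl (by simp_all)

def Separated (G : SimpleGraph V) (A B : Set V) : Prop :=
  ∀ a ∈ A, ∀ b ∈ B, ¬(a = b ∨ G.Adj a b)

lemma Separated.symm {A B : Set V} (h : Separated G A B) : Separated G B A :=
  fun b hb a ha hab => h a ha b hb (hab.imp Eq.symm G.adj_symm)

lemma Separated.mono {A B A' B' : Set V} (h : Separated G A B) (hA : A' ⊆ A) (hB : B' ⊆ B) :
    Separated G A' B' :=
  fun a ha b hb => h a (hA ha) b (hB hb)

lemma Separated.isDomOn_inter {A B S : Set V} (h : Separated G A B)
    (hS : IsDomOn G (A ∪ B) S) : IsDomOn G A (S ∩ A) := by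
  refine ⟨inter_subset_right, fun v hv => ?_⟩
  obtain ⟨s, hs, hsv⟩ := hS.2 v (Or.inl hv)
  exact ⟨s, ⟨hs, (hS.1 hs).resolve_right fun hsB => h.symm s hsB v hv hsv⟩, hsv⟩

variable [Finite V]

lemma Separated.domNumOn_add_le {A B : Set V} (h : Separated G A B) :
    domNumOn G A + domNumOn G B ≤ domNumOn G (A ∪ B) := by
  obtain ⟨S, hS, hSc⟩ := exists_isDomOn_ncard_eq_domNumOn (G := G) (A ∪ B)
  have hA := domNumOn_le_ncard (h.isDomOn_inter hS)
  have hB := domNumOn_le_ncard (h.symm.isDomOn_inter (union_comm A B ▸ hS))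
  have hBA : S ∩ B ⊆ S \ A := fun v hv => ⟨hv.1, fun hvA => h v hvA v hv.2 (Or.inl rfl)⟩
  have := ncard_le_ncard hBA
  have := ncard_inter_add_ncard_sdiff_eq_ncard S A
  omega

/-- A minimum dominating set of `A ∪ B` restricts to a dominating set of the side containing a
dominator of `x`; its remaining part, together with `x`, dominates the other side. -/
lemma domNumOn_add_le_union_add_one {A B : Set V} {x : V} (hxA : x ∈ A) (hxB : x ∈ B)
    (h : Separated G (A \ {x}) (B \ {x})) :
    domNumOn G A + domNumOn G B ≤ domNumOn G (A ∪ B) + 1 := by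
  obtain ⟨S, hS, hSc⟩ := exists_isDomOn_ncard_eq_domNumOn (G := G) (A ∪ B)
  obtain ⟨s, hs, hsx⟩ := hS.2 x (Or.inl hxA)
  wlog hsA : s ∈ A generalizing A B
  · have := this hxB hxA h.symm (union_comm A B ▸ hS) (union_comm A B ▸ hSc)
      ((hS.1 hs).resolve_left hsA)
    rw [union_comm] at this
    omega
  have hSA : IsDomOn G A (S ∩ A) := by
    refine ⟨inter_subset_right, fun v hv => ?_⟩
    by_cases hvx : v = x
    · exact ⟨s, ⟨hs, hsA⟩, hvx ▸ hsx⟩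
    obtain ⟨t, ht, htv⟩ := hS.2 v (Or.inl hv)
    refine ⟨t, ⟨ht, ?_⟩, htv⟩
    by_contra htA
    have htx : t ≠ x := fun htx => htA (htx ▸ hxA)
    exact h.symm t ⟨(hS.1 ht).resolve_left htA, htx⟩ v ⟨hv, hvx⟩ htv
  have hSB : IsDomOn G B (insert x (S \ A)) := by
    refine ⟨insert_subset hxB fun t ht => (hS.1 ht.1).resolve_left ht.2, fun v hv => ?_⟩
    by_cases hvx : v = x
    · exact ⟨x, mem_insert _ _, Or.inl hvx.symm⟩
    obtain ⟨t, ht, htv⟩ := hS.2 v (Or.inr hv)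
    by_cases htx : t = x
    · exact ⟨x, mem_insert _ _, htx ▸ htv⟩
    refine ⟨t, mem_insert_of_mem _ ⟨ht, fun htA => ?_⟩, htv⟩
    exact h t ⟨htA, htx⟩ v ⟨hv, hvx⟩ htv
  have := domNumOn_le_ncard hSA
  have := domNumOn_le_ncard hSB
  have := ncard_insert_le x (S \ A)
  have := ncard_inter_add_ncard_sdiff_eq_ncard S A
  omega

end Domination

/-- The setting of the coalescence `(H₁ • H₂)(x, x; x)`, with `Hᵢ` induced on `Wᵢ`. -/
structure IsCoalescence {V : Type*} (G : SimpleGraph V) (x : V) (W1 W2 : Set V) : Prop where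
  union_eq : W1 ∪ W2 = univ
  inter_eq : W1 ∩ W2 = {x}
  not_adj : ∀ a ∈ W1, ∀ b ∈ W2, a ≠ x → b ≠ x → ¬ G.Adj a b

namespace IsCoalescence

variable {V : Type*} {G : SimpleGraph V} {x : V} {W1 W2 : Set V}

lemma symm (hG : IsCoalescence G x W1 W2) : IsCoalescence G x W2 W1 :=
  ⟨union_comm W1 W2 ▸ hG.union_eq, inter_comm W1 W2 ▸ hG.inter_eq,
    fun a ha b hb hax hbx hab => hG.not_adj b hb a ha hbx hax hab.symm⟩

lemma mem_left (hG : IsCoalescence G x W1 W2) : x ∈ W1 :=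
  (hG.inter_eq.symm ▸ mem_singleton x : x ∈ W1 ∩ W2).1

lemma notMem_right (hG : IsCoalescence G x W1 W2) {y : V} (hy : y ∈ W1) (hyx : y ≠ x) :
    y ∉ W2 := fun hy2 => hyx (hG.inter_eq ▸ mem_inter hy hy2 : y ∈ ({x} : Set V))

lemma separated (hG : IsCoalescence G x W1 W2) : Separated G (W1 \ {x}) (W2 \ {x}) := by
  rintro a ⟨ha, hax⟩ b ⟨hb, hbx⟩ (rfl | hab)
  · exact hG.notMem_right ha hax hb
  · exact hG.not_adj a ha b hb hax hbx hab

lemma inter_union_inter (hG : IsCoalescence G x W1 W2) (C : Set V) : C ∩ W1 ∪ C ∩ W2 = C := by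
  rw [← inter_union_distrib_left, hG.union_eq, inter_univ]

lemma domNumOn_le_inter_add (hG : IsCoalescence G x W1 W2) (C : Set V) :
    domNumOn G C ≤ domNumOn G (C ∩ W1) + domNumOn G (C ∩ W2) := by
  conv_lhs => rw [← hG.inter_union_inter C]
  exact domNumOn_union_le _ _

lemma domNumOn_univ_le (hG : IsCoalescence G x W1 W2) :
    domNumOn G univ ≤ domNumOn G (W1 \ {x}) + domNumOn G W2 := by
  have hcover : W1 \ {x} ∪ W2 = univ := eq_univ_of_forall fun v => by
    by_cases hvx : v = x
    · exact Or.inr (hvx ▸ hG.symm.mem_left)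
    · have hv : v ∈ W1 ∪ W2 := hG.union_eq ▸ mem_univ v
      exact hv.imp_left fun hv1 => ⟨hv1, hvx⟩
  exact hcover ▸ domNumOn_union_le _ _

variable [Finite V]

lemma domNumOn_inter_add_le_of_mem (hG : IsCoalescence G x W1 W2) {C : Set V} (hxC : x ∈ C) :
    domNumOn G (C ∩ W1) + domNumOn G (C ∩ W2) ≤ domNumOn G C + 1 := by
  conv_rhs => rw [← hG.inter_union_inter C]
  exact domNumOn_add_le_union_add_one ⟨hxC, hG.mem_left⟩ ⟨hxC, hG.symm.mem_left⟩
    (hG.separated.mono (sdiff_subset_sdiff_left inter_subset_right)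
      (sdiff_subset_sdiff_left inter_subset_right))

lemma domNumOn_inter_add_eq_of_notMem (hG : IsCoalescence G x W1 W2) {C : Set V} (hxC : x ∉ C) :
    domNumOn G (C ∩ W1) + domNumOn G (C ∩ W2) = domNumOn G C := by
  refine le_antisymm ?_ (hG.domNumOn_le_inter_add C)
  conv_rhs => rw [← hG.inter_union_inter C]
  refine Separated.domNumOn_add_le (hG.separated.mono ?_ ?_) <;>
    exact fun v hv => ⟨hv.2, fun hvx => hxC (hvx ▸ hv.1)⟩

lemma isCritVertexOn_univ (hG : IsCoalescence G x W1 W2) (hwb : WeakBicriticalOn G univ)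
    {u1 u2 : V} (hu1 : u1 ∈ W1) (hxu1 : G.Adj x u1) (hu2 : u2 ∈ W2) (hxu2 : G.Adj x u2) :
    IsCritVertexOn G univ x := by
  refine lt_of_le_of_ne (hwb.1 x trivial) fun heq => ?_
  have hu1x : u1 ≠ x := hxu1.ne'
  have hu2x : u2 ≠ x := hxu2.ne'
  have hu1W2 := hG.notMem_right hu1 hu1x
  have hu2W1 := hG.symm.notMem_right hu2 hu2x
  have hcrit := hwb.2 x trivial heq
  have hsplit := hG.domNumOn_inter_add_eq_of_notMem (C := univ \ {x}) (fun h => h.2 rfl)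
  have hdel1 := hG.domNumOn_inter_add_eq_of_notMem (C := (univ \ {x}) \ {u1}) (fun h => h.1.2 rfl)
  have hdel2 := hG.domNumOn_inter_add_eq_of_notMem (C := (univ \ {x}) \ {u2}) (fun h => h.1.2 rfl)
  have hcover := hG.domNumOn_le_inter_add (((univ \ {x}) \ {u1}) \ {u2})
  simp only [sdiff_inter_right_comm, univ_inter, sdiff_singleton_eq_self, mem_sdiff, hu1W2, hu2W1,
    false_and, not_false_eq_true] at hsplit hdel1 hdel2 hcover
  have hlt1 := hcrit u1 ⟨trivial, hu1x⟩
  have hlt2 := hcrit u2 ⟨trivial, hu2x⟩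
  have hx : domNumOn G univ ≤ domNumOn G (((univ \ {x}) \ {u1}) \ {u2}) + 1 :=
    domNumOn_le_add_one_of_dominates_sdiff (subset_univ _) trivial fun v _ hv => by
      simp only [mem_sdiff, mem_univ, mem_singleton_iff, true_and, not_and, not_not] at hv
      by_cases hvx : v = x
      · exact Or.inl hvx.symm
      by_cases hvu1 : v = u1
      · exact Or.inr (hvu1 ▸ hxu1)
      · exact Or.inr (hv ⟨hvx, hvu1⟩ ▸ hxu2)
  unfold IsCritVertexOn at hlt1 hlt2
  omega

lemma isCritVertexOn_left (hG : IsCoalescence G x W1 W2) (hcrit : IsCritVertexOn G univ x) :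
    IsCritVertexOn G W1 x := by
  have hsplit := hG.domNumOn_inter_add_eq_of_notMem (C := univ \ {x}) (fun h => h.2 rfl)
  simp only [sdiff_inter_right_comm, univ_inter] at hsplit
  have := hG.symm.domNumOn_univ_le
  unfold IsCritVertexOn at hcrit ⊢
  omega

lemma domNumOn_univ_add_one (hG : IsCoalescence G x W1 W2) (hcrit : IsCritVertexOn G univ x) :
    domNumOn G univ + 1 = domNumOn G W1 + domNumOn G W2 := by
  have hsplit := hG.domNumOn_inter_add_eq_of_notMem (C := univ \ {x}) (fun h => h.2 rfl)
  have hjoin := hG.domNumOn_inter_add_le_of_mem (C := univ) trivial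
  simp only [sdiff_inter_right_comm, univ_inter] at hsplit hjoin
  have := domNumOn_le_sdiff_singleton_add_one (G := G) (mem_univ x)
  have := hG.isCritVertexOn_left hcrit
  have := hG.symm.isCritVertexOn_left hcrit
  unfold IsCritVertexOn at *
  omega

lemma domNumOn_sdiff_lt_of_lt (hG : IsCoalescence G x W1 W2)
    (hγ : domNumOn G univ + 1 = domNumOn G W1 + domNumOn G W2) {y : V} (hy : y ∈ W1)
    (hyx : y ≠ x) (hlt : domNumOn G (univ \ {y}) < domNumOn G univ) :
    domNumOn G (W1 \ {y}) < domNumOn G W1 := by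
  have := hG.domNumOn_inter_add_le_of_mem (C := univ \ {y}) ⟨trivial, fun h => hyx h.symm⟩
  simp only [sdiff_inter_right_comm, univ_inter, sdiff_singleton_eq_self (hG.notMem_right hy hyx)]
    at this
  omega

lemma domNumOn_sdiff_sdiff_lt (hG : IsCoalescence G x W1 W2) (hwb : WeakBicriticalOn G univ)
    (hγ : domNumOn G univ + 1 = domNumOn G W1 + domNumOn G W2) {y : V} (hy : y ∈ W1)
    (hyx : y ≠ x) (heq : domNumOn G (univ \ {y}) = domNumOn G univ) :
    domNumOn G ((W1 \ {y}) \ {x}) < domNumOn G W1 := by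
  have hlt := hwb.2 y trivial heq x ⟨trivial, fun h => hyx h.symm⟩
  have hsplit := hG.domNumOn_inter_add_eq_of_notMem (C := (univ \ {y}) \ {x}) (fun h => h.2 rfl)
  simp only [sdiff_inter_right_comm, univ_inter, sdiff_singleton_eq_self (hG.notMem_right hy hyx)]
    at hsplit
  have := domNumOn_le_sdiff_singleton_add_one (G := G) hG.symm.mem_left
  unfold IsCritVertexOn at hlt
  omega

lemma weakBicriticalOn (hG : IsCoalescence G x W1 W2) (hwb : WeakBicriticalOn G univ)
    (hγ : domNumOn G univ + 1 = domNumOn G W1 + domNumOn G W2) (hx : IsCritVertexOn G W1 x) :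
    WeakBicriticalOn G W1 := by
  constructor
  · intro y hy
    rcases eq_or_ne y x with rfl | hyx
    · exact hx.le
    rcases (hwb.1 y trivial).lt_or_eq with hlt | heq
    · exact (hG.domNumOn_sdiff_lt_of_lt hγ hy hyx hlt).le
    · have := hG.domNumOn_sdiff_sdiff_lt hwb hγ hy hyx heq
      have := domNumOn_le_sdiff_singleton_add_one (G := G) (A := W1 \ {y})
        ⟨hG.mem_left, fun h => hyx h.symm⟩
      omega
  · intro y hy heqy
    have hyx : y ≠ x := by rintro rfl; exact hx.ne heqy
    have heq : domNumOn G (univ \ {y}) = domNumOn G univ :=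
      (hwb.1 y trivial).eq_of_not_lt fun hlt => (hG.domNumOn_sdiff_lt_of_lt hγ hy hyx hlt).ne heqy
    intro w hw
    unfold IsCritVertexOn
    rcases eq_or_ne w x with rfl | hwx
    · have := hG.domNumOn_sdiff_sdiff_lt hwb hγ hy hyx heq
      omega
    · have hlt := hwb.2 y trivial heq w ⟨trivial, hw.2⟩
      have := hG.domNumOn_inter_add_le_of_mem (C := (univ \ {y}) \ {w})
        ⟨⟨trivial, fun h => hyx h.symm⟩, fun h => hwx h.symm⟩
      simp only [sdiff_inter_right_comm, univ_inter, sdiff_singleton_eq_self,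
        hG.notMem_right hy hyx, hG.notMem_right hw.1 hwx, not_false_eq_true] at this
      unfold IsCritVertexOn at hlt
      omega

lemma criticalOn_of_not_criticalOn (hG : IsCoalescence G x W1 W2)
    (hwb : WeakBicriticalOn G univ) (hγ : domNumOn G univ + 1 = domNumOn G W1 + domNumOn G W2)
    (hx1 : IsCritVertexOn G W1 x) (hx2 : IsCritVertexOn G W2 x) (hnc : ¬ CriticalOn G W1) :
    CriticalOn G W2 := by
  obtain ⟨y, hy, hyc⟩ : ∃ y ∈ W1, ¬ IsCritVertexOn G W1 y := by
    simpa only [CriticalOn, not_forall, exists_prop] using hnc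
  have hyx : y ≠ x := by rintro rfl; exact hyc hx1
  intro z hz
  rcases eq_or_ne z x with rfl | hzx
  · exact hx2
  have hzW1 := hG.symm.notMem_right hz hzx
  rcases (hwb.1 z trivial).lt_or_eq with hlt | heq
  · exact hG.symm.domNumOn_sdiff_lt_of_lt (hγ.trans (add_comm _ _)) hz hzx hlt
  have hlt := hwb.2 z trivial heq y ⟨trivial, fun h => hzW1 (h ▸ hy)⟩
  have := hG.domNumOn_inter_add_le_of_mem (C := (univ \ {z}) \ {y})
    ⟨⟨trivial, fun h => hzx h.symm⟩, fun h => hyx h.symm⟩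
  simp only [sdiff_inter_right_comm, univ_inter, sdiff_singleton_eq_self, mem_sdiff, hzW1,
    hG.notMem_right hy hyx, false_and, not_false_eq_true] at this
  unfold IsCritVertexOn at hyc hlt ⊢
  omega

end IsCoalescence

/-- Coalescence: if G is weak bicritical, then for some i, Hᵢ is critical, H₃₋ᵢ is weak
bicritical, and x is a critical vertex of H₃₋ᵢ. -/
theorem stmt_11 {V : Type*} [Fintype V] (G : SimpleGraph V) (x : V) (V1 V2 : Set V)
    (hunion : V1 ∪ V2 = Set.univ) (hinter : V1 ∩ V2 = {x})
    (hsep : ∀ a ∈ V1, ∀ b ∈ V2, a ≠ x → b ≠ x → ¬ G.Adj a b)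
    (hx1 : ∃ a ∈ V1, G.Adj x a) (hx2 : ∃ b ∈ V2, G.Adj x b)
    (hwb : WeakBicriticalOn G Set.univ) :
    (CriticalOn G V1 ∧ WeakBicriticalOn G V2 ∧ IsCritVertexOn G V2 x) ∨
      (CriticalOn G V2 ∧ WeakBicriticalOn G V1 ∧ IsCritVertexOn G V1 x) := by
  have hG : IsCoalescence G x V1 V2 := ⟨hunion, hinter, hsep⟩
  obtain ⟨u1, hu1, hxu1⟩ := hx1
  obtain ⟨u2, hu2, hxu2⟩ := hx2
  have hcrit := hG.isCritVertexOn_univ hwb hu1 hxu1 hu2 hxu2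
  have hγ := hG.domNumOn_univ_add_one hcrit
  have hcrit1 := hG.isCritVertexOn_left hcrit
  have hcrit2 := hG.symm.isCritVertexOn_left hcrit
  by_cases hc1 : CriticalOn G V1
  · exact Or.inl ⟨hc1, hG.symm.weakBicriticalOn hwb (hγ.trans (add_comm _ _)) hcrit2, hcrit2⟩
  · exact Or.inr ⟨hG.criticalOn_of_not_criticalOn hwb hγ hcrit1 hcrit2 hc1,
      hG.weakBicriticalOn hwb hγ hcrit1, hcrit1⟩
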